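/- arXiv:1911.07360 — 3 statements merged into one kernel-verified Lean document; each statement's English description precedes it below -/
import Mathlib

section
/- For polyhedra A = {a : H_a a ≤ b_a} and a compact convex set B, the Pontryagin difference A ⊖ CB equals {a : H_a a ≤ b_a − δ_a}, where the i-th component of δ_a is δ_{a,i} = sup_{b ∈ B} h_{a,i}ᵀ C b, with h_{a,i}ᵀ the i-th row of H_a. -/
open Matrix

/-- Half-space representation of the Pontryagin difference `A ⊖ CB`:
for a polyhedron `{a | H_a a ≤ b_a}` and a compact convex nonempty set `B`,
`A ⊖ CB = {a | H_a a ≤ b_a - δ_a}` where `δ_{a,i} = sup_{b ∈ B} h_{a,i}ᵀ C b`. -/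
theorem pontryagin_diff_halfspace {nA nB N : ℕ}
    (Ha : Matrix (Fin N) (Fin nA) ℝ) (ba : Fin N → ℝ)
    (B : Set (Fin nB → ℝ)) (hBne : B.Nonempty) (hBc : IsCompact B)
    (hBconv : Convex ℝ B)
    (C : (Fin nB → ℝ) →ₗ[ℝ] (Fin nA → ℝ))
    (δa : Fin N → ℝ)
    (hδa : ∀ i, δa i = sSup ((fun b => Ha i ⬝ᵥ C b) '' B)) :
    {d : Fin nA → ℝ | ∀ b ∈ B, ∀ i, Ha i ⬝ᵥ (d + C b) ≤ ba i}
      = {a : Fin nA → ℝ | ∀ i, Ha i ⬝ᵥ a ≤ ba i - δa i} := by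
  ext d
  have hcont : ∀ i : Fin N, Continuous fun b => Ha i ⬝ᵥ C b := by
    intro i
    simp only [dotProduct]
    exact continuous_finset_sum _ fun j _ =>
      continuous_const.mul ((continuous_apply j).comp C.continuous_of_finiteDimensional)
  have hbdd : ∀ i : Fin N, BddAbove ((fun b => Ha i ⬝ᵥ C b) '' B) := fun i =>
    (hBc.image (hcont i)).bddAbove
  simp only [Set.mem_setOf_eq]
  constructor
  · intro h i
    have hs : sSup ((fun b => Ha i ⬝ᵥ C b) '' B) ≤ ba i - Ha i ⬝ᵥ d := by
      apply csSup_le (hBne.image _)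
      rintro x ⟨b, hb, rfl⟩
      have := h b hb i
      rw [dotProduct_add] at this
      linarith
    rw [hδa i]
    linarith
  · intro h b hb i
    rw [dotProduct_add]
    have h1 : Ha i ⬝ᵥ C b ≤ δa i := by
      rw [hδa i]
      exact le_csSup (hbdd i) ⟨b, hb, rfl⟩
    have := h i
    linarith
end

section
/- If (1+ε) A^s Δ ⊆ ε Δ for some integer s ≥ 1 and ε ∈ (0,1), and Δ is convex with 0 ∈ Δ, then the set F := (1+ε) ⊕_{j=0}^{s-1} A^j Δ is RPI for e_{k+1} = A e_k + δ_k, δ_k ∈ Δ, i.e., A F ⊕ Δ ⊆ F. -/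
open Matrix Pointwise

/-- If `(1+ε) A^s Δ ⊆ ε Δ` for some `s ≥ 1` and `ε ∈ (0,1)`, and `Δ` is convex
with `0 ∈ Δ`, then `F := (1+ε) ⊕_{j=0}^{s-1} A^j Δ` is RPI:
`A F ⊕ Δ ⊆ F`. -/
theorem eps_approx_is_rpi {n : ℕ}
    (A : Matrix (Fin n) (Fin n) ℝ)
    (Δ : Set (Fin n → ℝ)) (hΔconv : Convex ℝ Δ) (h0 : (0 : Fin n → ℝ) ∈ Δ)
    (s : ℕ) (hs : 1 ≤ s) (ε : ℝ) (hε0 : 0 < ε) (hε1 : ε < 1)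
    (hcontract : (1 + ε) • ((A ^ s).mulVec '' Δ) ⊆ ε • Δ)
    (F : Set (Fin n → ℝ))
    (hF : F = (1 + ε) • {x : Fin n → ℝ | ∃ δ : ℕ → (Fin n → ℝ),
      (∀ j, δ j ∈ Δ) ∧ x = ∑ j ∈ Finset.range s, (A ^ j).mulVec (δ j)}) :
    ∀ e ∈ F, ∀ δ ∈ Δ, A.mulVec e + δ ∈ F := by
  obtain ⟨t, rfl⟩ : ∃ t, s = t + 1 := ⟨s - 1, by omega⟩
  subst hF
  rintro e he δd hδd
  rw [Set.mem_smul_set] at he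
  obtain ⟨x, ⟨δ, hδ, rfl⟩, rfl⟩ := he
  have hpos : (0:ℝ) < 1 + ε := by linarith
  have hmem : (1 + ε) • ((A ^ (t+1)).mulVec (δ t)) ∈ ε • Δ :=
    hcontract (Set.smul_mem_smul_set (Set.mem_image_of_mem _ (hδ t)))
  rw [Set.mem_smul_set] at hmem
  obtain ⟨δ', hδ', hEq⟩ := hmem
  set μ0 : Fin n → ℝ := (ε/(1+ε)) • δ' + ((1:ℝ)/(1+ε)) • δd with hμ0
  have hμ0mem : μ0 ∈ Δ :=
    hΔconv hδ' hδd (by positivity) (by positivity) (by field_simp; ring)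
  set μ : ℕ → (Fin n → ℝ) := fun j => match j with
    | 0 => μ0
    | k + 1 => δ k with hμ
  have hμmem : ∀ j, μ j ∈ Δ := by
    intro j; cases j with
    | zero => exact hμ0mem
    | succ k => exact hδ k
  rw [Set.mem_smul_set]
  refine ⟨∑ j ∈ Finset.range (t+1), (A ^ j).mulVec (μ j), ⟨μ, hμmem, rfl⟩, ?_⟩
  have hAx : A.mulVec ((1 + ε) • ∑ j ∈ Finset.range (t+1), (A ^ j).mulVec (δ j))
      = (1 + ε) • ∑ j ∈ Finset.range (t+1), (A ^ (j+1)).mulVec (δ j) := by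
    rw [Matrix.mulVec_smul]
    congr 1
    rw [show A.mulVec (∑ j ∈ Finset.range (t+1), (A ^ j).mulVec (δ j))
        = ∑ j ∈ Finset.range (t+1), A.mulVec ((A ^ j).mulVec (δ j)) from
      map_sum A.mulVecLin _ _]
    refine Finset.sum_congr rfl fun j _ => ?_
    rw [Matrix.mulVec_mulVec, ← pow_succ']
  rw [Finset.sum_range_succ' (fun j => (A ^ j).mulVec (μ j))]
  have hμsimp : ∀ j, μ (j + 1) = δ j := fun j => rfl
  have hμ0' : μ 0 = μ0 := rfl
  simp only [hμsimp, hμ0', pow_zero, Matrix.one_mulVec]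
  rw [hAx, Finset.sum_range_succ, smul_add, smul_add, smul_add, ← hEq,
    smul_smul, smul_smul]
  have h1 : (1 + ε) * (ε / (1 + ε)) = ε := by field_simp
  have h2 : (1 + ε) * (1 / (1 + ε)) = 1 := by field_simp
  rw [h1, h2, one_smul]
  abel
end

section
/- Scaling and sum bound for Minkowski-sum RPI approximations: if Δ is convex with 0 ∈ Δ and (1+ε)A^s Δ ⊆ εΔ, then the ε-approximation F(ε,s) = (1+ε)⊕_{j=0}^{s-1} A^j Δ satisfies R_∞ ⊆ F(ε,s) ⊆ R_∞ ⊕ εB whenever ⊕_{j=0}^{s-1} A^j Δ ⊆ R_∞ and ε·R_∞ ⊆ εB for a suitable bounded set B ⊇ R_∞; in particular R_∞ ⊆ F(ε,s). -/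
open Matrix Pointwise

/-- The ε-approximation dominates the minimal RPI set: if `Δ` is compact convex
with `0 ∈ Δ` and `(1+ε) A^s Δ ⊆ ε Δ`, then
`R_∞ = closure (⊕_{j≥0} A^j Δ) ⊆ F(ε,s) = (1+ε) ⊕_{j=0}^{s-1} A^j Δ`. -/
theorem minimal_rpi_subset_eps_approx {n : ℕ}
    (A : Matrix (Fin n) (Fin n) ℝ)
    (hschur : ∀ μ ∈ spectrum ℂ (A.map (Complex.ofReal)), ‖μ‖ < 1)
    (Δ : Set (Fin n → ℝ)) (hΔc : IsCompact Δ) (hΔconv : Convex ℝ Δ)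
    (h0 : (0 : Fin n → ℝ) ∈ Δ)
    (s : ℕ) (hs : 1 ≤ s) (ε : ℝ) (hε0 : 0 < ε)
    (hcontract : (1 + ε) • ((A ^ s).mulVec '' Δ) ⊆ ε • Δ)
    (Rinf : Set (Fin n → ℝ))
    (hRinf : Rinf = closure {x : Fin n → ℝ | ∃ (t : ℕ) (δ : ℕ → (Fin n → ℝ)),
      (∀ j, δ j ∈ Δ) ∧ x = ∑ j ∈ Finset.range (t + 1), (A ^ j).mulVec (δ j)}) :
    Rinf ⊆ (1 + ε) • {x : Fin n → ℝ | ∃ δ : ℕ → (Fin n → ℝ),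
      (∀ j, δ j ∈ Δ) ∧ x = ∑ j ∈ Finset.range s, (A ^ j).mulVec (δ j)} := by
  subst hRinf
  have hε1 : (0:ℝ) < 1 + ε := by linarith
  set S : Set (Fin n → ℝ) := {x : Fin n → ℝ | ∃ δ : ℕ → (Fin n → ℝ),
      (∀ j, δ j ∈ Δ) ∧ x = ∑ j ∈ Finset.range s, (A ^ j).mulVec (δ j)} with hSdef
  -- 0 ∈ S
  have h0S : (0 : Fin n → ℝ) ∈ S := by
    refine ⟨fun _ => 0, fun _ => h0, ?_⟩
    simp [Matrix.mulVec_zero]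
  -- S is convex
  have hconvS : Convex ℝ S := by
    rintro x ⟨δ, hδ, rfl⟩ y ⟨η, hη, rfl⟩ a b ha hb hab
    refine ⟨fun j => a • δ j + b • η j, fun j => hΔconv (hδ j) (hη j) ha hb hab, ?_⟩
    rw [Finset.smul_sum, Finset.smul_sum, ← Finset.sum_add_distrib]
    refine Finset.sum_congr rfl fun j _ => ?_
    simp [Matrix.mulVec_add, Matrix.mulVec_smul]
  -- mulVec of a sum
  have hmapsum : ∀ (B : Matrix (Fin n) (Fin n) ℝ) (m : ℕ) (f : ℕ → (Fin n → ℝ)),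
      B.mulVec (∑ j ∈ Finset.range m, f j) = ∑ j ∈ Finset.range m, B.mulVec (f j) := by
    intro B m f
    induction m with
    | zero => simp [Matrix.mulVec_zero]
    | succ k ihm =>
        rw [Finset.sum_range_succ, Finset.sum_range_succ, Matrix.mulVec_add, ihm]
  -- contraction on S
  have hcontrS : ∀ x ∈ S, ∃ y ∈ S, (1 + ε) • (A ^ s).mulVec x = ε • y := by
    rintro x ⟨δ, hδ, rfl⟩
    have hchoice : ∀ j, ∃ d ∈ Δ, (1 + ε) • (A ^ s).mulVec (δ j) = ε • d := by
      intro j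
      have hmem : (1 + ε) • (A ^ s).mulVec (δ j) ∈ (1 + ε) • ((A ^ s).mulVec '' Δ) :=
        Set.smul_mem_smul_set (Set.mem_image_of_mem _ (hδ j))
      obtain ⟨d, hd, hde⟩ := hcontract hmem
      exact ⟨d, hd, hde.symm⟩
    choose d hd hde using hchoice
    refine ⟨∑ j ∈ Finset.range s, (A ^ j).mulVec (d j), ⟨d, hd, rfl⟩, ?_⟩
    rw [hmapsum, Finset.smul_sum, Finset.smul_sum]
    refine Finset.sum_congr rfl fun j _ => ?_
    have hcomm : (A ^ s).mulVec ((A ^ j).mulVec (δ j)) = (A ^ j).mulVec ((A ^ s).mulVec (δ j)) := by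
      rw [Matrix.mulVec_mulVec, Matrix.mulVec_mulVec, ← pow_add, ← pow_add, Nat.add_comm]
    rw [hcomm, ← Matrix.mulVec_smul, hde, Matrix.mulVec_smul]
  -- S ⊆ (1+ε) • S
  have hSsub : ∀ x ∈ S, x ∈ (1 + ε) • S := by
    intro x hx
    refine ⟨(1 + ε)⁻¹ • x, ?_, ?_⟩
    · exact hconvS.smul_mem_of_zero_mem h0S hx
        ⟨by positivity, by rw [inv_le_one_iff₀]; right; linarith⟩
    · exact smul_inv_smul₀ (ne_of_gt hε1) x
  -- main claim by strong induction
  have main : ∀ t : ℕ, ∀ δ : ℕ → (Fin n → ℝ), (∀ j, δ j ∈ Δ) →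
      (∑ j ∈ Finset.range t, (A ^ j).mulVec (δ j)) ∈ (1 + ε) • S := by
    intro t
    induction t using Nat.strong_induction_on with
    | _ t ih =>
      intro δ hδ
      by_cases hts : t ≤ s
      · -- pad with zeros
        have hx : (∑ j ∈ Finset.range t, (A ^ j).mulVec (δ j)) ∈ S := by
          refine ⟨fun j => if j < t then δ j else 0, fun j => ?_, ?_⟩
          · by_cases h : j < t
            · simpa [h] using hδ j
            · simpa [h] using h0
          · rw [← Finset.sum_subset (Finset.range_subset_range.mpr hts)
              (fun j _ hj => by
                rw [Finset.mem_range, not_lt] at hj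
                simp [Nat.not_lt.mpr hj, Matrix.mulVec_zero])]
            refine Finset.sum_congr rfl fun j hj => ?_
            rw [Finset.mem_range] at hj
            simp [hj]
        exact hSsub _ hx
      · push_neg at hts
        obtain ⟨m, rfl⟩ : ∃ m, t = s + m := ⟨t - s, by omega⟩
        have hm : 0 < m := by omega
        rw [Finset.sum_range_add]
        have hw := ih m (by omega) (fun j => δ (s + j)) (fun j => hδ _)
        obtain ⟨z, hz, hzw0⟩ := hw
        have hzw : (1 + ε) • z = ∑ j ∈ Finset.range m, (A ^ j).mulVec (δ (s + j)) := hzw0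
        have htail : (∑ j ∈ Finset.range m, (A ^ (s + j)).mulVec (δ (s + j)))
            = (A ^ s).mulVec (∑ j ∈ Finset.range m, (A ^ j).mulVec (δ (s + j))) := by
          rw [hmapsum]
          refine Finset.sum_congr rfl fun j _ => ?_
          rw [Matrix.mulVec_mulVec, ← pow_add]
        obtain ⟨u, hu, hue⟩ := hcontrS z hz
        have htail2 : (∑ j ∈ Finset.range m, (A ^ (s + j)).mulVec (δ (s + j))) = ε • u := by
          rw [htail, ← hzw, Matrix.mulVec_smul, hue]
        rw [htail2]
        set y0 := ∑ j ∈ Finset.range s, (A ^ j).mulVec (δ j) with hy0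
        have hy0S : y0 ∈ S := ⟨δ, hδ, rfl⟩
        refine ⟨(1 + ε)⁻¹ • y0 + (ε / (1 + ε)) • u, ?_, ?_⟩
        · have := hconvS hy0S hu (a := (1 + ε)⁻¹) (b := ε / (1 + ε))
            (by positivity) (by positivity) (by field_simp)
          exact this
        · show (1 + ε) • ((1 + ε)⁻¹ • y0 + (ε / (1 + ε)) • u) = y0 + ε • u
          rw [smul_add, smul_smul, smul_smul, mul_inv_cancel₀ (ne_of_gt hε1), one_smul,
            mul_div_cancel₀ _ (ne_of_gt hε1)]
  -- S is compact, hence (1+ε) • S is closed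
  have hScompact : IsCompact S := by
    have himg : S = (fun f : ℕ → (Fin n → ℝ) =>
        ∑ j ∈ Finset.range s, (A ^ j).mulVec (f j)) '' (Set.pi Set.univ fun _ => Δ) := by
      ext x
      constructor
      · rintro ⟨δ, hδ, rfl⟩
        exact ⟨δ, fun j _ => hδ j, rfl⟩
      · rintro ⟨δ, hδ, rfl⟩
        exact ⟨δ, fun j => hδ j (Set.mem_univ j), rfl⟩
    rw [himg]
    refine (isCompact_univ_pi fun _ => hΔc).image ?_
    refine continuous_finset_sum _ fun j _ => ?_
    exact ((A ^ j).mulVecLin.continuous_of_finiteDimensional).comp (continuous_apply j)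
  have hclosed : IsClosed ((1 + ε) • S) := by
    exact (hScompact.smul (1 + ε)).isClosed
  refine closure_minimal ?_ hclosed
  rintro x ⟨t, δ, hδ, rfl⟩
  exact main (t + 1) δ hδ
end
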